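/- arXiv:0806.2633 — 2 statements merged into one kernel-verified Lean document; each statement's English description precedes it below -/
import Mathlib

section
/- Let A₁,…,Aₙ be positive semidefinite n×n complex matrices and 0 < p < 1. Then n^{p−1} ∑ᵢ ‖Aᵢ‖ₚᵖ ≤ ‖∑ᵢ Aᵢ‖ₚᵖ ≤ ∑ᵢ ‖Aᵢ‖ₚᵖ, where ‖A‖ₚ = (tr(A^p))^{1/p} for positive semidefinite A. -/
/-!
For concave `f`, `M ↦ tr f(M)` is concave on positive semidefinite matrices: in the eigenbasis of
`a • A + b • B` the diagonal entries depend affinely on `A` and `B`, and the diagonal of `V⋆ C V` is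
a doubly stochastic image of the eigenvalues of `C`, so Jensen gives `tr f(C) ≤ ∑ⱼ f((V⋆ C V)ⱼⱼ)`.
With `f = (· ^ p)` and weights `1 / n` applied to `n • Aᵢ` this is the lower bound.
For the upper bound write `A = a⋆ a`, `B = b⋆ b` and stack `X = [a; b]`: then `X⋆ X = A + B`, while
`X X⋆` has the same spectrum padded with zeros and diagonal blocks `a a⋆`, `b b⋆`, isospectral to
`A`, `B`; pinching `X X⋆` to its diagonal blocks can only increase `tr f`, and `f 0 ≥ 0`
absorbs the padding.
-/

/-- `schattenPow p A` is `‖A‖ₚᵖ = tr |A|ᵖ`, computed as the sum of the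
`p/2`-th real powers of the eigenvalues of `Aᴴ * A` (squared singular values). -/
noncomputable def schattenPow (p : ℝ) {m : ℕ} (A : Matrix (Fin m) (Fin m) ℂ) : ℝ :=
  ∑ i, ((Matrix.isHermitian_conjTranspose_mul_self A).eigenvalues i) ^ (p / 2)

open Polynomial
open scoped ComplexOrder

namespace Matrix

variable {𝕜 : Type*} [RCLike 𝕜] {m n : Type*} [Fintype m] [Fintype n]

lemma PosSemidef.re_star_mul_mul_apply_self_nonneg {A : Matrix n n 𝕜} (hA : A.PosSemidef)
    (V : Matrix n n 𝕜) (j : n) : 0 ≤ RCLike.re ((star V * A * V) j j) :=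
  (RCLike.nonneg_iff.mp (hA.conjTranspose_mul_mul_same V).diag_nonneg).1

variable [DecidableEq m] [DecidableEq n]

/-- `tr f(M)`: the sum of `f` over the (real parts of the) eigenvalues of `M` with multiplicity.
Reading them off the characteristic polynomial makes it a function of `M` alone, invariant under
`A * B ↦ B * A`. -/
noncomputable def spectralSum (f : ℝ → ℝ) (M : Matrix n n 𝕜) : ℝ :=
  (M.charpoly.roots.map fun z => f (RCLike.re z)).sum

variable {f : ℝ → ℝ}

lemma IsHermitian.spectralSum_eq {M : Matrix n n 𝕜} (hM : M.IsHermitian) :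
    spectralSum f M = ∑ i, f (hM.eigenvalues i) := by
  simp [spectralSum, hM.roots_charpoly_eq_eigenvalues, Finset.sum_map_val]

lemma IsHermitian.spectralSum_cfc {M : Matrix n n 𝕜} (hM : M.IsHermitian) (g : ℝ → ℝ) :
    spectralSum f (cfc g M) = ∑ i, f (g (hM.eigenvalues i)) := by
  rw [spectralSum, hM.charpoly_cfc_eq, Polynomial.roots_prod _ _ (by
    simp [Finset.prod_ne_zero_iff, Polynomial.X_sub_C_ne_zero])]
  simp [Finset.sum_map_val]

lemma spectralSum_zero : spectralSum f (0 : Matrix n n 𝕜) = Fintype.card n * f 0 := by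
  simp [spectralSum, Multiset.map_nsmul, Multiset.sum_nsmul]

lemma spectralSum_mul_comm (A B : Matrix n n 𝕜) :
    spectralSum f (A * B) = spectralSum f (B * A) := by
  rw [spectralSum, charpoly_mul_comm, spectralSum]

lemma spectralSum_mul_comm' (A : Matrix m n 𝕜) (B : Matrix n m 𝕜) :
    Fintype.card n * f 0 + spectralSum f (A * B)
      = Fintype.card m * f 0 + spectralSum f (B * A) := by
  have h := congrArg (fun p : 𝕜[X] => (p.roots.map fun z => f (RCLike.re z)).sum)
    (charpoly_mul_comm' A B)
  simpa [spectralSum, roots_mul, (charpoly_monic _).ne_zero, X_ne_zero, pow_ne_zero,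
    Multiset.map_nsmul, Multiset.sum_nsmul] using h

lemma spectralSum_fromBlocks_zero₁₂ (A : Matrix m m 𝕜) (C : Matrix n m 𝕜) (D : Matrix n n 𝕜) :
    spectralSum f (fromBlocks A 0 C D) = spectralSum f A + spectralSum f D := by
  simp [spectralSum, roots_mul, (charpoly_monic _).ne_zero]

lemma norm_sq_mem_doublyStochastic_of_mem_unitaryGroup {U : Matrix n n 𝕜}
    (hU : U ∈ unitaryGroup n 𝕜) :
    of (fun i j => ‖U i j‖ ^ 2) ∈ doublyStochastic ℝ n := by
  rw [mem_doublyStochastic_iff_sum]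
  refine ⟨fun i j => sq_nonneg _, fun i => ?_, fun j => ?_⟩
  · have h := congr_fun₂ (mem_unitaryGroup_iff.mp hU) i i
    simp only [mul_apply, star_apply, RCLike.star_def, RCLike.mul_conj, one_apply_eq] at h
    exact_mod_cast h
  · have h := congr_fun₂ (mem_unitaryGroup_iff'.mp hU) j j
    simp only [mul_apply, star_apply, RCLike.star_def, RCLike.conj_mul, one_apply_eq] at h
    exact_mod_cast h

lemma mul_diagonal_mul_star_apply_self (U : Matrix n n 𝕜) (d : n → ℝ) (j : n) :
    (U * diagonal (RCLike.ofReal ∘ d) * star U : Matrix n n 𝕜) j j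
      = (((of fun i k => ‖U i k‖ ^ 2) *ᵥ d) j : 𝕜) := by
  rw [mul_apply]
  simp only [mul_diagonal, star_apply, RCLike.star_def, mulVec, dotProduct, of_apply,
    Function.comp_apply, RCLike.ofReal_sum, RCLike.ofReal_mul, RCLike.ofReal_pow]
  refine Finset.sum_congr rfl fun k _ => ?_
  rw [mul_right_comm, RCLike.mul_conj, mul_comm]

lemma _root_.ConcaveOn.sum_le_sum_mulVec {s : Set ℝ} (hf : ConcaveOn ℝ s f) {P : Matrix n n ℝ}
    (hP : P ∈ doublyStochastic ℝ n) {x : n → ℝ} (hx : ∀ k, x k ∈ s) :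
    ∑ k, f (x k) ≤ ∑ j, f ((P *ᵥ x) j) := by
  calc ∑ k, f (x k) = ∑ j, (P *ᵥ (f ∘ x)) j := (sum_mulVec_of_mem_doublyStochastic hP).symm
    _ ≤ ∑ j, f ((P *ᵥ x) j) := Finset.sum_le_sum fun j _ => by
      simpa [mulVec, dotProduct] using hf.le_map_sum
        (fun k _ => nonneg_of_mem_doublyStochastic hP) (sum_row_of_mem_doublyStochastic hP j)
        (fun k _ => hx k)

lemma IsHermitian.spectralSum_le_sum_re_diag {s : Set ℝ} (hf : ConcaveOn ℝ s f)
    {C : Matrix n n 𝕜} (hC : C.IsHermitian) (hCs : ∀ k, hC.eigenvalues k ∈ s)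
    {V : Matrix n n 𝕜} (hV : V ∈ unitaryGroup n 𝕜) :
    spectralSum f C ≤ ∑ j, f (RCLike.re ((star V * C * V) j j)) := by
  set W := star V * (hC.eigenvectorUnitary : Matrix n n 𝕜)
  have hW : W ∈ unitaryGroup n 𝕜 := mul_mem (Unitary.star_mem hV) hC.eigenvectorUnitary.2
  have hconj : star V * C * V = W * diagonal (RCLike.ofReal ∘ hC.eigenvalues) * star W := by
    conv_lhs => rw [hC.spectral_theorem, Unitary.conjStarAlgAut_apply]
    simp [W, star_mul, mul_assoc]
  rw [hC.spectralSum_eq]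
  convert hf.sum_le_sum_mulVec (norm_sq_mem_doublyStochastic_of_mem_unitaryGroup hW) hCs
    using 3 with j
  rw [hconj, mul_diagonal_mul_star_apply_self, RCLike.ofReal_re]

lemma IsHermitian.re_star_eigenvectorUnitary_mul_mul_apply_self {S : Matrix n n 𝕜}
    (hS : S.IsHermitian) (j : n) :
    RCLike.re ((star (hS.eigenvectorUnitary : Matrix n n 𝕜) * S * hS.eigenvectorUnitary) j j)
      = hS.eigenvalues j := by
  have h := hS.conjStarAlgAut_star_eigenvectorUnitary
  rw [Unitary.conjStarAlgAut_apply, Unitary.coe_star, star_star] at h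
  simp [h]

lemma concaveOn_spectralSum (hf : ConcaveOn ℝ (Set.Ici 0) f) :
    ConcaveOn ℝ {M : Matrix n n 𝕜 | M.PosSemidef} (spectralSum f) := by
  refine ⟨fun A hA B hB a b ha hb _ => (hA.smul ha).add (hB.smul hb), ?_⟩
  intro A hA B hB a b ha hb hab
  have hS : (a • A + b • B).IsHermitian := ((hA.smul ha).add (hB.smul hb)).1
  set V := (hS.eigenvectorUnitary : Matrix n n 𝕜)
  let d (M : Matrix n n 𝕜) (j : n) : ℝ := RCLike.re ((star V * M * V) j j)
  have hd (M : Matrix n n 𝕜) (hM : M.PosSemidef) (j : n) : d M j ∈ Set.Ici 0 :=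
    hM.re_star_mul_mul_apply_self_nonneg V j
  have hdS (j : n) : a • d A j + b • d B j = hS.eigenvalues j := by
    rw [← hS.re_star_eigenvectorUnitary_mul_mul_apply_self]
    simp [d, V, Matrix.mul_add, Matrix.add_mul, RCLike.smul_re]
  calc a • spectralSum f A + b • spectralSum f B
      ≤ a • ∑ j, f (d A j) + b • ∑ j, f (d B j) := by
        gcongr
        · exact hA.1.spectralSum_le_sum_re_diag hf (fun k => hA.eigenvalues_nonneg k)
            hS.eigenvectorUnitary.2
        · exact hB.1.spectralSum_le_sum_re_diag hf (fun k => hB.eigenvalues_nonneg k)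
            hS.eigenvectorUnitary.2
    _ = ∑ j, (a • f (d A j) + b • f (d B j)) := by
        rw [Finset.sum_add_distrib, Finset.smul_sum, Finset.smul_sum]
    _ ≤ ∑ j, f (a • d A j + b • d B j) :=
        Finset.sum_le_sum fun j _ => hf.2 (hd A hA j) (hd B hB j) ha hb hab
    _ = spectralSum f (a • A + b • B) := by
        simp only [hdS, hS.spectralSum_eq]

lemma spectralSum_le_toBlocks (hf : ConcaveOn ℝ (Set.Ici 0) f)
    {M : Matrix (m ⊕ n) (m ⊕ n) 𝕜} (hM : M.PosSemidef) :
    spectralSum f M ≤ spectralSum f M.toBlocks₁₁ + spectralSum f M.toBlocks₂₂ := by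
  -- averaging `M` with its conjugate by the unitary `1 ⊕ -1` kills the off-diagonal blocks
  set U : Matrix (m ⊕ n) (m ⊕ n) 𝕜 := fromBlocks 1 0 0 (-1)
  have hU : Uᴴ = U := by simp [U, fromBlocks_conjTranspose]
  have hUU : U * U = 1 := by simp [U, fromBlocks_multiply, fromBlocks_one]
  have hflip : spectralSum f (U * M * Uᴴ) = spectralSum f M := by
    rw [hU, spectralSum_mul_comm, ← Matrix.mul_assoc, hUU, Matrix.one_mul]
  have hpinch : (1 / 2 : ℝ) • M + (1 / 2 : ℝ) • (U * M * Uᴴ)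
      = fromBlocks M.toBlocks₁₁ 0 0 M.toBlocks₂₂ := by
    rw [hU]
    conv_lhs => rw [← fromBlocks_toBlocks M]
    simp [U, fromBlocks_multiply, fromBlocks_smul, fromBlocks_add, ← add_smul]
    norm_num
  have h := (concaveOn_spectralSum hf).2 hM (hM.mul_mul_conjTranspose_same U)
    (show (0 : ℝ) ≤ 1 / 2 by norm_num) (show (0 : ℝ) ≤ 1 / 2 by norm_num) (by norm_num)
  rw [hpinch, hflip, spectralSum_fromBlocks_zero₁₂, ← add_smul] at h
  norm_num at h
  exact h

open scoped MatrixOrder in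
lemma spectralSum_add_le (hf : ConcaveOn ℝ (Set.Ici 0) f) (hf0 : 0 ≤ f 0)
    {A B : Matrix n n 𝕜} (hA : A.PosSemidef) (hB : B.PosSemidef) :
    spectralSum f (A + B) ≤ spectralSum f A + spectralSum f B := by
  obtain ⟨a, rfl⟩ := CStarAlgebra.nonneg_iff_eq_star_mul_self.mp hA.nonneg
  obtain ⟨b, rfl⟩ := CStarAlgebra.nonneg_iff_eq_star_mul_self.mp hB.nonneg
  simp only [star_eq_conjTranspose]
  set X : Matrix (n ⊕ n) n 𝕜 := fromRows a b
  have hXX : Xᴴ * X = aᴴ * a + bᴴ * b := by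
    simp [X, conjTranspose_fromRows_eq_fromCols_conjTranspose, fromCols_mul_fromRows]
  have hXX' : X * Xᴴ = fromBlocks (a * aᴴ) (a * bᴴ) (b * aᴴ) (b * bᴴ) := by
    simp [X, conjTranspose_fromRows_eq_fromCols_conjTranspose]
  have hcomm := spectralSum_mul_comm' (f := f) X Xᴴ
  have hpinch := spectralSum_le_toBlocks hf (posSemidef_self_mul_conjTranspose X)
  rw [hXX', toBlocks_fromBlocks₁₁, toBlocks_fromBlocks₂₂, spectralSum_mul_comm a,
    spectralSum_mul_comm b] at hpinch
  rw [hXX, hXX', Fintype.card_sum, Nat.cast_add] at hcomm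
  nlinarith [mul_nonneg (Nat.cast_nonneg (Fintype.card n) : (0 : ℝ) ≤ _) hf0]

lemma spectralSum_sum_le (hf : ConcaveOn ℝ (Set.Ici 0) f) (hf0 : f 0 = 0) {ι : Type*}
    (s : Finset ι) {A : ι → Matrix n n 𝕜} (hA : ∀ i ∈ s, (A i).PosSemidef) :
    spectralSum f (∑ i ∈ s, A i) ≤ ∑ i ∈ s, spectralSum f (A i) := by
  classical
  induction s using Finset.induction_on with
  | empty => simp [spectralSum_zero, hf0]
  | insert i s hi ih =>
    have hs (j : ι) (hj : j ∈ s) : (A j).PosSemidef := hA j (Finset.mem_insert_of_mem hj)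
    rw [Finset.sum_insert hi, Finset.sum_insert hi]
    exact (spectralSum_add_le hf hf0.ge (hA i (Finset.mem_insert_self i s))
      (posSemidef_sum s hs)).trans (add_le_add le_rfl (ih hs))

lemma PosSemidef.spectralSum_rpow_smul {A : Matrix n n 𝕜} (hA : A.PosSemidef) {c : ℝ}
    (hc : 0 ≤ c) (p : ℝ) :
    spectralSum (· ^ p) (c • A) = c ^ p * spectralSum (· ^ p) A := by
  rw [← cfc_const_mul_id c A hA.1.isSelfAdjoint, hA.1.spectralSum_cfc, hA.1.spectralSum_eq,
    Finset.mul_sum]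
  exact Finset.sum_congr rfl fun i _ => Real.mul_rpow hc (hA.eigenvalues_nonneg i)

lemma card_rpow_mul_sum_spectralSum_rpow_le {ι : Type*} [Fintype ι] {A : ι → Matrix n n 𝕜}
    (hA : ∀ i, (A i).PosSemidef) {p : ℝ} (hp0 : 0 ≤ p) (hp1 : p ≤ 1) :
    (Fintype.card ι : ℝ) ^ (p - 1) * ∑ i, spectralSum (· ^ p) (A i)
      ≤ spectralSum (· ^ p) (∑ i, A i) := by
  rcases isEmpty_or_nonempty ι with hι | hι
  · simpa [spectralSum_zero] using mul_nonneg (Nat.cast_nonneg _) (Real.rpow_nonneg le_rfl p)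
  set N : ℝ := (Fintype.card ι : ℝ)
  have hN : 0 < N := Nat.cast_pos.mpr Fintype.card_pos
  have h := (concaveOn_spectralSum (Real.concaveOn_rpow hp0 hp1)).le_map_sum
    (t := Finset.univ) (w := fun _ => N⁻¹) (p := fun i => N • A i) (fun _ _ => by positivity)
    (by simp [N]) (fun i _ => (hA i).smul hN.le)
  simp only [smul_smul, inv_mul_cancel₀ hN.ne', one_smul, (hA _).spectralSum_rpow_smul hN.le,
    smul_eq_mul] at h
  calc N ^ (p - 1) * ∑ i, spectralSum (· ^ p) (A i)
      = ∑ i, N⁻¹ * (N ^ p * spectralSum (· ^ p) (A i)) := by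
        rw [Finset.mul_sum, Real.rpow_sub_one hN.ne']
        exact Finset.sum_congr rfl fun i _ => by ring
    _ ≤ spectralSum (· ^ p) (∑ i, A i) := h

end Matrix

open Matrix in
lemma schattenPow_eq_spectralSum {m : ℕ} {A : Matrix (Fin m) (Fin m) ℂ} (hA : A.PosSemidef)
    (p : ℝ) : schattenPow p A = spectralSum (· ^ p) A := by
  have hAA : Aᴴ * A = cfc (· ^ 2 : ℝ → ℝ) A := by
    rw [cfc_pow_id A 2 hA.1.isSelfAdjoint, hA.1.eq, sq]
  rw [schattenPow, ← (isHermitian_conjTranspose_mul_self A).spectralSum_eq (f := (· ^ (p / 2))),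
    hAA, hA.1.spectralSum_cfc, hA.1.spectralSum_eq]
  refine Finset.sum_congr rfl fun i _ => ?_
  rw [← Real.rpow_natCast, ← Real.rpow_mul (hA.eigenvalues_nonneg i)]
  congr 1
  push_cast
  ring

open scoped ComplexOrder in
theorem stmt10 (n : ℕ) (A : Fin n → Matrix (Fin n) (Fin n) ℂ)
    (hA : ∀ i, (A i).PosSemidef) (p : ℝ) (hp0 : 0 < p) (hp1 : p < 1) :
    (n : ℝ) ^ (p - 1) * ∑ i, schattenPow p (A i) ≤ schattenPow p (∑ i, A i) ∧
      schattenPow p (∑ i, A i) ≤ ∑ i, schattenPow p (A i) := by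
  rw [schattenPow_eq_spectralSum (Matrix.posSemidef_sum _ fun i _ => hA i)]
  simp only [schattenPow_eq_spectralSum (hA _)]
  refine ⟨by simpa using Matrix.card_rpow_mul_sum_spectralSum_rpow_le hA hp0.le hp1.le, ?_⟩
  exact Matrix.spectralSum_sum_le (Real.concaveOn_rpow hp0.le hp1.le) (Real.zero_rpow hp0.ne') _
    fun i _ => hA i
end

section
/- Let A₁,…,Aₙ be bounded operators on a Hilbert space with Aᵢ*Aⱼ = 0 for all i ≠ j, and let t₁,…,tₙ be nonnegative reals with ∑ᵢ tᵢ = 1. Then ‖∑ᵢ √tᵢ · Aᵢ‖² ≤ ∑ᵢ tᵢ‖Aᵢ − ∑ⱼ tⱼAⱼ‖² + ‖∑ⱼ tⱼAⱼ‖², where ‖·‖ is the operator norm. -/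
/-!
Write `|b|² = star b * b`. If `star aᵢ * aⱼ = 0` for `i ≠ j`, the cross terms of `|∑ √tᵢ aᵢ|²`
vanish, leaving `∑ tᵢ |aᵢ|²`.
With `m = ∑ tⱼ aⱼ` and `∑ tᵢ = 1` this splits as `∑ tᵢ |aᵢ - m|² + |m|²` (the variance identity),
and the C⋆-identity `‖star b * b‖ = ‖b‖²` with the triangle inequality bounds its norm.
-/

open Finset

section StarAlgebra

variable {ι A : Type*} [Fintype ι] [NonUnitalRing A] [StarRing A] [Module ℝ A] [StarModule ℝ A]
  [IsScalarTower ℝ A A] [SMulCommClass ℝ A A]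

theorem star_sum_smul_mul_sum_smul_of_orthogonal (a : ι → A)
    (horth : ∀ i j, i ≠ j → star (a i) * a j = 0) (c : ι → ℝ) :
    star (∑ i, c i • a i) * ∑ i, c i • a i = ∑ i, (c i * c i) • (star (a i) * a i) := by
  simp only [star_sum, star_smul, star_trivial, sum_mul_sum, smul_mul_smul_comm]
  refine sum_congr rfl fun i _ => ?_
  refine sum_eq_single i (fun j _ hji => ?_) (fun h => absurd (mem_univ i) h)
  rw [horth i j hji.symm, smul_zero]

theorem sum_smul_star_mul_self_eq_sum_smul_star_sub_mul_sub_add (a : ι → A) (t : ι → ℝ)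
    (hsum : ∑ i, t i = 1) :
    ∑ i, t i • (star (a i) * a i) =
      ∑ i, t i • (star (a i - ∑ j, t j • a j) * (a i - ∑ j, t j • a j)) +
        star (∑ j, t j • a j) * ∑ j, t j • a j := by
  set m := ∑ j, t j • a j
  have hstar_m : star m = ∑ j, t j • star (a j) := by simp [m, star_sum, star_smul]
  have expand : ∀ i, t i • (star (a i - m) * (a i - m)) =
      t i • (star (a i) * a i) - (t i • star (a i)) * m - star m * (t i • a i) +
        t i • (star m * m) := by
    intro i
    simp only [star_sub, sub_mul, mul_sub, smul_mul_assoc, mul_smul_comm]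
    module
  simp only [expand, sum_add_distrib, sum_sub_distrib, ← sum_mul, ← mul_sum, ← hstar_m,
    ← sum_smul, hsum, one_smul]
  abel

end StarAlgebra

section CStarRing

variable {ι A : Type*} [Fintype ι] [NonUnitalNormedRing A] [StarRing A] [CStarRing A]
  [NormedSpace ℝ A]

theorem norm_sum_smul_star_mul_self_le (b : ι → A) {t : ι → ℝ} (ht : ∀ i, 0 ≤ t i) :
    ‖∑ i, t i • (star (b i) * b i)‖ ≤ ∑ i, t i * ‖b i‖ ^ 2 :=
  calc ‖∑ i, t i • (star (b i) * b i)‖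
      ≤ ∑ i, ‖t i • (star (b i) * b i)‖ := norm_sum_le _ _
    _ = ∑ i, t i * ‖b i‖ ^ 2 := by
        simp only [norm_smul, Real.norm_of_nonneg (ht _), CStarRing.norm_star_mul_self, sq]

variable [StarModule ℝ A] [IsScalarTower ℝ A A] [SMulCommClass ℝ A A]

theorem norm_sum_sqrt_smul_sq_le_of_orthogonal (a : ι → A)
    (horth : ∀ i j, i ≠ j → star (a i) * a j = 0) {t : ι → ℝ} (ht : ∀ i, 0 ≤ t i)
    (hsum : ∑ i, t i = 1) :
    ‖∑ i, √(t i) • a i‖ ^ 2 ≤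
      ∑ i, t i * ‖a i - ∑ j, t j • a j‖ ^ 2 + ‖∑ j, t j • a j‖ ^ 2 := by
  set m := ∑ j, t j • a j
  calc ‖∑ i, √(t i) • a i‖ ^ 2
      = ‖star (∑ i, √(t i) • a i) * ∑ i, √(t i) • a i‖ := by
        rw [CStarRing.norm_star_mul_self, sq]
    _ = ‖∑ i, t i • (star (a i - m) * (a i - m)) + star m * m‖ := by
        simp only [star_sum_smul_mul_sum_smul_of_orthogonal a horth, Real.mul_self_sqrt (ht _),
          sum_smul_star_mul_self_eq_sum_smul_star_sub_mul_sub_add a t hsum, m]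
    _ ≤ ‖∑ i, t i • (star (a i - m) * (a i - m))‖ + ‖star m * m‖ := norm_add_le _ _
    _ ≤ ∑ i, t i * ‖a i - m‖ ^ 2 + ‖m‖ ^ 2 := by
        rw [CStarRing.norm_star_mul_self, ← sq]
        gcongr
        exact norm_sum_smul_star_mul_self_le _ ht

end CStarRing

theorem stmt17 {H : Type*} [NormedAddCommGroup H] [InnerProductSpace ℂ H]
    [CompleteSpace H] (n : ℕ) (A : Fin n → H →L[ℂ] H)
    (horth : ∀ i j, i ≠ j → ContinuousLinearMap.adjoint (A i) * A j = 0)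
    (t : Fin n → ℝ) (ht : ∀ i, 0 ≤ t i) (hsum : ∑ i, t i = 1) :
    ‖∑ i, Real.sqrt (t i) • A i‖ ^ 2 ≤
      ∑ i, t i * ‖A i - ∑ j, t j • A j‖ ^ 2 + ‖∑ j, t j • A j‖ ^ 2 :=
  norm_sum_sqrt_smul_sq_le_of_orthogonal A horth ht hsum
end
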